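/- arXiv:1901.00264 — 9 statements merged into one kernel-verified Lean document; each statement's English description precedes it below -/
import Mathlib

section
/- Let a, b ≥ 2 be coprime natural numbers. For every natural number i ≥ 1, the set of natural numbers m with ℓ(a,b,m) = i is finite and has exactly a·b elements. -/
/-- `ell a b m` is the number of pairs `(i, j)` of positive integers with `m = a * i + b * j`. -/
noncomputable def ell (a b m : ℕ) : ℕ :=
  {p : ℕ × ℕ | 0 < p.1 ∧ 0 < p.2 ∧ m = a * p.1 + b * p.2}.ncard

lemma shift_exists {b x u : ℕ} (hb : 0 < b) (hx1 : 1 ≤ x) (hxb : x ≤ b)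
    (hu : 1 ≤ u) (hmod : u % b = x % b) : ∃ k, u = x + b * k := by
  have hmod' : x ≡ u [MOD b] := hmod.symm
  rcases le_or_gt x u with h | h
  · obtain ⟨k, hk⟩ := (Nat.modEq_iff_dvd' h).mp hmod'
    exact ⟨k, by omega⟩
  · obtain ⟨k, hk⟩ := (Nat.modEq_iff_dvd' h.le).mp hmod'.symm
    rcases Nat.eq_zero_or_pos k with h0 | h0
    · subst h0; omega
    · have hbk : b ≤ b * k := Nat.le_mul_of_pos_right b h0
      omega

lemma eq_of_mod_eq {b x x' : ℕ} (hx1 : 1 ≤ x) (hxb : x ≤ b)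
    (hx1' : 1 ≤ x') (hxb' : x' ≤ b) (h : x % b = x' % b) : x = x' := by
  have hb : 0 < b := lt_of_lt_of_le hx1 hxb
  obtain ⟨k, hk⟩ := shift_exists hb hx1' hxb' hx1 h
  rcases Nat.eq_zero_or_pos k with h0 | h0
  · subst h0; omega
  · have hbk : b ≤ b * k := Nat.le_mul_of_pos_right b h0
    omega

lemma mod_cancel {a b u x w v : ℕ} (hab : Nat.gcd a b = 1)
    (e : a * u + b * v = a * x + b * w) : u % b = x % b := by
  have h1 : (a * u + b * v) % b = (a * x + b * w) % b := by rw [e]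
  rw [Nat.add_mul_mod_self_left, Nat.add_mul_mod_self_left] at h1
  exact Nat.ModEq.cancel_left_of_coprime (by rwa [Nat.gcd_comm] at hab) h1

lemma ell_formula {a b : ℕ} (ha : 2 ≤ a) (hb : 2 ≤ b) (hab : Nat.gcd a b = 1)
    {x y : ℕ} (hx1 : 1 ≤ x) (hxb : x ≤ b) (hy1 : 1 ≤ y) (hya : y ≤ a) (n : ℕ) :
    ell a b (a * x + b * y + n * (a * b)) = n + 1 := by
  have hb0 : 0 < b := by omega
  have ha0 : 0 < a := by omega
  have hset : {p : ℕ × ℕ | 0 < p.1 ∧ 0 < p.2 ∧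
      a * x + b * y + n * (a * b) = a * p.1 + b * p.2}
      = (fun k => (x + b * k, y + a * (n - k))) '' (Set.Iic n) := by
    ext ⟨u, v⟩
    simp only [Set.mem_setOf_eq, Set.mem_image, Set.mem_Iic, Prod.mk.injEq]
    constructor
    · rintro ⟨hu, hv, heq⟩
      have e : a * u + b * v = a * x + b * (y + n * a) := by rw [← heq]; ring
      have hmod : u % b = x % b := mod_cancel hab e
      obtain ⟨k, hk⟩ := shift_exists hb0 hx1 hxb hu hmod
      subst hk
      have e2 : a * k + v = y + n * a := by
        have h : b * (a * k + v) = b * (y + n * a) := by linarith [e]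
        exact Nat.eq_of_mul_eq_mul_left hb0 h
      have hkn : k ≤ n := by
        by_contra hc
        push_neg at hc
        have h2 : a * (n + 1) ≤ a * k := Nat.mul_le_mul_left a hc
        linarith [e2, h2, hya, hv]
      refine ⟨k, hkn, rfl, ?_⟩
      obtain ⟨t, rfl⟩ : ∃ t, n = k + t := ⟨n - k, by omega⟩
      have ht : k + t - k = t := by omega
      rw [ht]
      linarith [e2]
    · rintro ⟨k, hkn, hk1, hk2⟩
      obtain ⟨t, rfl⟩ : ∃ t, n = k + t := ⟨n - k, by omega⟩
      have ht : k + t - k = t := by omega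
      rw [ht] at hk2
      refine ⟨?_, ?_, ?_⟩
      · rw [← hk1]; omega
      · rw [← hk2]; omega
      · rw [← hk1, ← hk2]; ring
  rw [ell, hset]
  rw [Set.ncard_image_of_injOn]
  · rw [← Finset.coe_Iic, Set.ncard_coe_finset, Nat.card_Iic]
  · intro k _ k' _ h
    simp only [Prod.mk.injEq] at h
    have h1 := h.1
    have h2 : b * k = b * k' := by omega
    exact Nat.eq_of_mul_eq_mul_left hb0 h2

theorem card_level_set_eq (a b : ℕ) (ha : 2 ≤ a) (hb : 2 ≤ b)
    (hab : Nat.gcd a b = 1) (i : ℕ) (hi : 1 ≤ i) :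
    {m : ℕ | ell a b m = i}.Finite ∧ {m : ℕ | ell a b m = i}.ncard = a * b := by
  have hb0 : 0 < b := by omega
  have ha0 : 0 < a := by omega
  have hset : {m : ℕ | ell a b m = i}
      = (fun p : ℕ × ℕ => a * p.1 + b * p.2 + (i - 1) * (a * b)) ''
        (Set.Icc 1 b ×ˢ Set.Icc 1 a) := by
    ext m
    simp only [Set.mem_setOf_eq, Set.mem_image, Set.mem_prod, Set.mem_Icc]
    constructor
    · intro hm
      have hne : {p : ℕ × ℕ | 0 < p.1 ∧ 0 < p.2 ∧ m = a * p.1 + b * p.2}.Nonempty := by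
        by_contra h
        rw [Set.not_nonempty_iff_eq_empty] at h
        have h0 : ell a b m = 0 := by rw [ell, h, Set.ncard_empty]
        omega
      obtain ⟨⟨u, v⟩, hu, hv, heq⟩ := hne
      simp only at hu hv heq
      obtain ⟨r, q, hr, hrq⟩ : ∃ r q, r + b * q = u - 1 ∧ r < b :=
        ⟨(u - 1) % b, (u - 1) / b, Nat.mod_add_div _ _, Nat.mod_lt _ hb0⟩
      obtain ⟨s, p, hs, hsp⟩ : ∃ s p, s + a * p = v - 1 ∧ s < a :=
        ⟨(v - 1) % a, (v - 1) / a, Nat.mod_add_div _ _, Nat.mod_lt _ ha0⟩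
      have hu' : u = (r + 1) + b * q := by omega
      have hv' : v = (s + 1) + a * p := by omega
      have hm' : m = a * (r + 1) + b * (s + 1) + (q + p) * (a * b) := by
        rw [heq, hu', hv']; ring
      have hell := ell_formula ha hb hab (by omega : 1 ≤ r + 1) (by omega : r + 1 ≤ b)
        (by omega : 1 ≤ s + 1) (by omega : s + 1 ≤ a) (q + p)
      rw [hm', hell] at hm
      refine ⟨(r + 1, s + 1), ⟨⟨by omega, by omega⟩, by omega, by omega⟩, ?_⟩
      simp only
      have hqp : i - 1 = q + p := by omega
      rw [hqp, hm']
    · rintro ⟨⟨x, y⟩, ⟨⟨hx1, hxb⟩, ⟨hy1, hya⟩⟩, rfl⟩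
      simp only
      have := ell_formula ha hb hab hx1 hxb hy1 hya (i - 1)
      rw [this]; omega
  constructor
  · rw [hset]
    exact (((Set.finite_Icc 1 b).prod (Set.finite_Icc 1 a))).image _
  · rw [hset]
    rw [Set.ncard_image_of_injOn]
    · rw [← Finset.coe_Icc, ← Finset.coe_Icc, ← Finset.coe_product,
        Set.ncard_coe_finset, Finset.card_product, Nat.card_Icc, Nat.card_Icc]
      simp [Nat.mul_comm]
    · rintro ⟨x, y⟩ ⟨⟨hx1, hxb⟩, hy1, hya⟩ ⟨x', y'⟩ ⟨⟨hx1', hxb'⟩, hy1', hya'⟩ h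
      simp only at h hx1 hxb hy1 hya hx1' hxb' hy1' hya'
      have e : a * x + b * y = a * x' + b * y' := by omega
      have hxx : x = x' := eq_of_mod_eq hx1 hxb hx1' hxb' (mod_cancel hab e)
      subst hxx
      have h2 : b * y = b * y' := by omega
      have hyy : y = y' := Nat.eq_of_mul_eq_mul_left hb0 h2
      simp [hyy]
end

section
/- Let a, b ≥ 2 be coprime natural numbers. The set of natural numbers m ≥ 1 with ℓ(a,b,m) = 0 is finite and has exactly a·b − (a−1)(b−1)/2 elements. (Here (a−1)(b−1) is even since a and b are coprime.) -/
/-!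
Write `N = a * b + a + b`. For `0 < m < N`, exactly one of `m` and `N - m` is of the form
`a * i + b * j` with `i, j ≥ 1`: both cannot be, since adding the two representations would
write `a * b` as `a * u + b * v` with `u, v ≥ 1`, forcing `b ∣ u` and `a ∣ v`; and if `m` is not,
then the residue `1 ≤ i ≤ b` of `m / a` modulo `b` satisfies `m ≤ a * i`, which yields a
representation of `N - m` with first coordinate `b + 1 - i`. Every `m ≥ N` is representable, so
the gaps are exactly half of `1, …, N - 1`, i.e. `(N - 1) / 2 = a * b - (a - 1) * (b - 1) / 2`.
-/

open Finset

def IsPosComb (a b m : ℕ) : Prop := ∃ i j, 0 < i ∧ 0 < j ∧ a * i + b * j = m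

section

variable {a b m n : ℕ}

lemma ell_eq_zero_iff (ha : 0 < a) (hb : 0 < b) : ell a b m = 0 ↔ ¬ IsPosComb a b m := by
  have hfin : {p : ℕ × ℕ | 0 < p.1 ∧ 0 < p.2 ∧ m = a * p.1 + b * p.2}.Finite := by
    refine (Set.finite_Iic (m, m)).subset ?_
    rintro ⟨i, j⟩ ⟨-, -, rfl⟩
    exact ⟨Nat.le_add_right_of_le (Nat.le_mul_of_pos_left i ha),
      Nat.le_add_left_of_le (Nat.le_mul_of_pos_left j hb)⟩
  rw [ell, Set.ncard_eq_zero hfin, Set.eq_empty_iff_forall_notMem, IsPosComb]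
  simp only [Prod.forall, Set.mem_ofPred_eq, eq_comm (a := m), not_exists, not_and]

lemma exists_pos_le_mul_modEq (hab : a.Coprime b) (hb : 0 < b) (m : ℕ) :
    ∃ i, 0 < i ∧ i ≤ b ∧ a * i ≡ m [MOD b] := by
  obtain ⟨i, hib, him⟩ := Nat.exists_mul_mod_eq_of_coprime m hab hb.ne'
  rcases i.eq_zero_or_pos with rfl | hi
  · exact ⟨b, hb, le_rfl, by simpa [Nat.ModEq] using him⟩
  · exact ⟨i, hi, hib.le, him⟩

lemma isPosComb_of_mul_modEq_of_lt {i : ℕ} (hi : 0 < i) (him : a * i ≡ m [MOD b])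
    (hlt : a * i < m) : IsPosComb a b m := by
  obtain ⟨j, hj⟩ := (Nat.modEq_iff_dvd' hlt.le).mp him
  exact ⟨i, j, hi, Nat.pos_of_ne_zero (by rintro rfl; omega), by omega⟩

lemma isPosComb_of_le (hab : a.Coprime b) (hb : 0 < b) (hm : a * b + a + b ≤ m) :
    IsPosComb a b m := by
  obtain ⟨i, hi, hib, him⟩ := exists_pos_le_mul_modEq hab hb m
  exact isPosComb_of_mul_modEq_of_lt hi him (by nlinarith)

lemma mul_add_mul_ne_mul (hab : a.Coprime b) (hb : 0 < b) {u v : ℕ}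
    (hu : 0 < u) (hv : 0 < v) : a * u + b * v ≠ a * b := by
  intro h
  have hbu : b ∣ u := hab.symm.dvd_of_dvd_mul_left <|
    (Nat.dvd_add_right (dvd_mul_right b v)).mp (by rw [add_comm, h]; exact dvd_mul_left b a)
  have hav : a ∣ v := hab.dvd_of_dvd_mul_left <|
    (Nat.dvd_add_right (dvd_mul_right a u)).mp (h ▸ dvd_mul_right a b)
  nlinarith [Nat.le_of_dvd hu hbu, Nat.le_of_dvd hv hav, hb]

lemma not_isPosComb_and_isPosComb (hab : a.Coprime b) (hb : 0 < b)
    (hmn : m + n = a * b + a + b) : ¬ (IsPosComb a b m ∧ IsPosComb a b n) := by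
  rintro ⟨⟨i, j, hi, hj, rfl⟩, ⟨i', j', hi', hj', rfl⟩⟩
  refine mul_add_mul_ne_mul hab hb (u := i + i' - 1) (v := j + j' - 1) (by omega) (by omega) ?_
  zify [show 1 ≤ i + i' by omega, show 1 ≤ j + j' by omega] at hmn ⊢
  linear_combination hmn

lemma isPosComb_or_isPosComb (hab : a.Coprime b) (hb : 0 < b) (hmn : m + n = a * b + a + b) :
    IsPosComb a b m ∨ IsPosComb a b n := by
  obtain ⟨i, hi, hib, him⟩ := exists_pos_le_mul_modEq hab hb m
  rcases lt_or_ge (a * i) m with hlt | hle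
  · exact .inl (isPosComb_of_mul_modEq_of_lt hi him hlt)
  obtain ⟨k, hk⟩ := (Nat.modEq_iff_dvd' hle).mp him.symm
  -- `a * i = m + b * k`, so `n = a * (b + 1 - i) + b * (k + 1)`.
  refine .inr ⟨b + 1 - i, k + 1, by omega, by omega, ?_⟩
  zify [show i ≤ b + 1 by omega, hle] at hk hmn ⊢
  linear_combination -hmn - hk

lemma isPosComb_iff_not (hab : a.Coprime b) (hb : 0 < b) (hmn : m + n = a * b + a + b) :
    IsPosComb a b n ↔ ¬ IsPosComb a b m :=
  ⟨fun hn hm => not_isPosComb_and_isPosComb hab hb hmn ⟨hm, hn⟩,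
    (isPosComb_or_isPosComb hab hb hmn).resolve_left⟩

lemma setOf_ell_eq_zero_eq [DecidablePred (IsPosComb a b)] (hab : a.Coprime b) (ha : 0 < a)
    (hb : 0 < b) :
    {m | 1 ≤ m ∧ ell a b m = 0} = ↑{m ∈ Ico 1 (a * b + a + b) | ¬ IsPosComb a b m} := by
  ext m
  simp only [Set.mem_ofPred_eq, coe_filter, mem_Ico, ell_eq_zero_iff ha hb]
  exact ⟨fun h => ⟨⟨h.1, not_le.mp fun hm => h.2 (isPosComb_of_le hab hb hm)⟩, h.2⟩,
    fun h => ⟨h.1.1, h.2⟩⟩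

end

lemma two_mul_card_filter_not_eq {p : ℕ → Prop} [DecidablePred p] {N : ℕ}
    (hp : ∀ m, 0 < m → m < N → (p (N - m) ↔ ¬ p m)) :
    2 * #{m ∈ Ico 1 N | ¬ p m} = N - 1 := by
  have hsymm : #{m ∈ Ico 1 N | ¬ p m} = #{m ∈ Ico 1 N | p m} := by
    refine card_nbij' (N - ·) (N - ·) ?_ ?_ ?_ ?_ <;> intro m hm <;>
      simp only [coe_filter, Set.mem_ofPred_eq, mem_Ico] at hm ⊢
    · exact ⟨by omega, (hp m (by omega) (by omega)).mpr hm.2⟩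
    · have := hp (N - m) (by omega) (by omega)
      rw [Nat.sub_sub_self (by omega)] at this
      exact ⟨by omega, this.mp hm.2⟩
    all_goals omega
  have := card_filter_add_card_filter_not (s := Ico 1 N) (fun m => p m)
  rw [Nat.card_Ico] at this
  omega

theorem card_gaps_eq (a b : ℕ) (ha : 2 ≤ a) (hb : 2 ≤ b)
    (hab : Nat.gcd a b = 1) :
    {m : ℕ | 1 ≤ m ∧ ell a b m = 0}.Finite ∧
      {m : ℕ | 1 ≤ m ∧ ell a b m = 0}.ncard = a * b - (a - 1) * (b - 1) / 2 := by
  classical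
  rw [setOf_ell_eq_zero_eq hab (by omega) (by omega), Set.ncard_coe_finset]
  refine ⟨finite_toSet _, ?_⟩
  have hcard := two_mul_card_filter_not_eq (p := IsPosComb a b) (N := a * b + a + b)
    fun m _ hm => isPosComb_iff_not hab (by omega) (Nat.add_sub_of_le hm.le)
  -- `a * b + a + b - 1 = 2 * a * b - (a - 1) * (b - 1)`; in particular `(a - 1) * (b - 1)` is even.
  obtain ⟨c, rfl⟩ : ∃ c, a = c + 1 := ⟨a - 1, by omega⟩
  obtain ⟨d, rfl⟩ : ∃ d, b = d + 1 := ⟨b - 1, by omega⟩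
  simp only [Nat.add_sub_cancel, show (c + 1) * (d + 1) = c * d + c + d + 1 by ring] at hcard ⊢
  omega
end

section
/- Let a, b ≥ 2 be coprime natural numbers. For all natural numbers i and m, if m > a·b·i then ℓ(a,b,m) ≥ i. -/
theorem ell_ge_of_gt (a b : ℕ) (ha : 2 ≤ a) (hb : 2 ≤ b)
    (hab : Nat.gcd a b = 1) :
    ∀ i m : ℕ, m > a * b * i → ell a b m ≥ i := by
  intro i m hm
  rcases Nat.eq_zero_or_pos i with hi | hi
  · simp [hi]
  -- i ≥ 1, so m > a*b
  have hmab : a * b < m := by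
    calc a * b = a * b * 1 := by ring
    _ ≤ a * b * i := Nat.mul_le_mul_left _ hi
    _ < m := hm
  haveI : NeZero b := ⟨by omega⟩
  -- find x0 ∈ [1, b] with a*x0 ≡ m [MOD b]
  have hunit : IsUnit (a : ZMod b) := by
    rw [ZMod.isUnit_iff_coprime]
    exact hab
  set r : ℕ := ((m : ZMod b) * (↑a)⁻¹).val with hr
  have hrlt : r < b := ZMod.val_lt _
  have hmod : a * r ≡ m [MOD b] := by
    have : ((a * r : ℕ) : ZMod b) = (m : ZMod b) := by
      push_cast [hr]
      rw [ZMod.natCast_val, ZMod.cast_id]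
      rw [← mul_assoc, mul_comm (a : ZMod b), mul_assoc]
      rw [ZMod.mul_inv_of_unit _ hunit, mul_one]
    exact (ZMod.natCast_eq_natCast_iff _ _ _).mp this
  set x0 : ℕ := if r = 0 then b else r with hx0
  have hx0pos : 1 ≤ x0 := by by_cases h : r = 0 <;> simp [hx0, h] <;> omega
  have hx0le : x0 ≤ b := by by_cases h : r = 0 <;> simp [hx0, h] <;> omega
  have hmodx0 : a * x0 ≡ m [MOD b] := by
    by_cases h : r = 0
    · simp only [hx0, h, if_pos]
      have h1 : a * b % b = 0 := Nat.mul_mod_left a b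
      have h2 : a * r % b = m % b := hmod
      rw [h] at h2
      simp at h2
      unfold Nat.ModEq
      omega
    · simpa [hx0, h] using hmod
  have hax0 : a * x0 < m := lt_of_le_of_lt (Nat.mul_le_mul_left a hx0le) hmab
  -- get t with m = a*x0 + b*t
  obtain ⟨t, ht⟩ : ∃ t, m = a * x0 + b * t := by
    have hd : b ∣ m - a * x0 := (Nat.modEq_iff_dvd' (le_of_lt hax0)).mp hmodx0
    obtain ⟨t, ht⟩ := hd
    exact ⟨t, by omega⟩
  -- for k < i, t > a * k
  have hkey : ∀ k, k < i → a * k < t := by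
    intro k hk
    have h1 : a * b * k + a * b < m := by
      calc a * b * k + a * b = a * b * (k + 1) := by ring
      _ ≤ a * b * i := Nat.mul_le_mul_left _ (by omega)
      _ < m := hm
    have h2 : b * (a * k) < b * t := by
      have : a * x0 ≤ a * b := Nat.mul_le_mul_left a hx0le
      calc b * (a * k) = a * b * k := by ring
      _ < m - a * b := by omega
      _ ≤ m - a * x0 := by omega
      _ = b * t := by omega
    exact lt_of_mul_lt_mul_left h2 (Nat.zero_le b)
  -- the solution set
  set S : Set (ℕ × ℕ) := {p : ℕ × ℕ | 0 < p.1 ∧ 0 < p.2 ∧ m = a * p.1 + b * p.2} with hS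
  have hfin : S.Finite := by
    apply Set.Finite.subset ((Set.finite_Iic m).prod (Set.finite_Iic m))
    rintro ⟨x, y⟩ ⟨hx, hy, hxy⟩
    constructor <;> simp only [Set.mem_Iic] <;> nlinarith
  set F : ℕ → ℕ × ℕ := fun k => (x0 + b * k, t - a * k) with hF
  have hsub : ↑((Finset.range i).image F) ⊆ S := by
    intro p hp
    simp only [Finset.coe_image, Set.mem_image, Finset.coe_range, Set.mem_Iio] at hp
    obtain ⟨k, hk, rfl⟩ := hp
    have htk := hkey k hk
    refine ⟨by simp [hF]; omega, by simp [hF]; omega, ?_⟩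
    simp only [hF]
    have : b * (t - a * k) = b * t - b * (a * k) := Nat.mul_sub b t (a*k)
    have hba : b * (a * k) = a * (b * k) := by ring
    have hbt : b * (a * k) ≤ b * t := Nat.mul_le_mul_left b (le_of_lt htk)
    calc m = a * x0 + b * t := ht
    _ = a * x0 + a * (b * k) + (b * t - b * (a * k)) := by omega
    _ = a * (x0 + b * k) + b * (t - a * k) := by rw [this]; ring
  have hinj : Set.InjOn F ↑(Finset.range i) := by
    intro k1 _ k2 _ h
    have h1 : x0 + b * k1 = x0 + b * k2 := congrArg Prod.fst h
    have : b * k1 = b * k2 := by omega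
    exact Nat.eq_of_mul_eq_mul_left (by omega) this
  have hcard : ((Finset.range i).image F).card = i := by
    rw [Finset.card_image_of_injOn hinj, Finset.card_range]
  calc i = ((Finset.range i).image F).card := hcard.symm
  _ = (↑((Finset.range i).image F) : Set (ℕ × ℕ)).ncard := (Set.ncard_coe_finset _).symm
  _ ≤ S.ncard := Set.ncard_le_ncard hsub hfin
  _ = ell a b m := rfl
end

section
/- Let a, b ≥ 2 be coprime natural numbers and let i ≥ 1. Then the set {m ∈ ℕ : m ≥ 1 and ℓ(a,b,m) < i} is equal to the set difference {1, 2, …, a·b·i} \ 𝓜_i, where 𝓜_i = {m ∈ ℕ : 1 ≤ m ≤ a·b·i and ℓ(a,b,m) = i}. -/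
lemma sol_finite (a b m : ℕ) (ha : 2 ≤ a) (hb : 2 ≤ b) :
    {p : ℕ × ℕ | 0 < p.1 ∧ 0 < p.2 ∧ m = a * p.1 + b * p.2}.Finite := by
  apply Set.Finite.subset ((Set.finite_Iic m).prod (Set.finite_Iic m))
  rintro ⟨x, y⟩ ⟨hx, hy, h⟩
  constructor <;> simp only [Set.mem_Iic] <;> nlinarith

lemma div_eq_same_mod (b x y : ℕ) (hb : 0 < b) (hx : 1 ≤ x) (hy : 1 ≤ y)
    (hmod : x ≡ y [MOD b]) (hdiv : (x - 1) / b = (y - 1) / b) : x = y := by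
  rcases le_total x y with hle | hle
  · obtain ⟨t, ht⟩ := (Nat.modEq_iff_dvd' hle).mp hmod
    have hyx : y = x + b * t := by omega
    subst hyx
    have : (x - 1 + t * b) / b = (x - 1) / b + t := Nat.add_mul_div_right _ _ hb
    have h2 : (x + b * t - 1) = (x - 1 + t * b) := by rw [Nat.mul_comm b t]; omega
    rw [h2, this] at hdiv
    have ht0 : t = 0 := by omega
    subst ht0
    simp
  · obtain ⟨t, ht⟩ := (Nat.modEq_iff_dvd' hle).mp hmod.symm
    have hyx : x = y + b * t := by omega
    subst hyx
    have : (y - 1 + t * b) / b = (y - 1) / b + t := Nat.add_mul_div_right _ _ hb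
    have h2 : (y + b * t - 1) = (y - 1 + t * b) := by rw [Nat.mul_comm b t]; omega
    rw [h2, this] at hdiv
    have ht0 : t = 0 := by omega
    subst ht0
    simp

lemma ell_le (a b m i : ℕ) (ha : 2 ≤ a) (hb : 2 ≤ b) (hab : Nat.gcd a b = 1)
    (hm : m ≤ a * b * i) : ell a b m ≤ i := by
  have hb0 : 0 < b := by omega
  have key := Set.ncard_le_ncard_of_injOn (fun p : ℕ × ℕ => (p.1 - 1) / b)
    (s := {p : ℕ × ℕ | 0 < p.1 ∧ 0 < p.2 ∧ m = a * p.1 + b * p.2})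
    (t := Set.Iio i) ?_ ?_ (Set.finite_Iio i)
  · have hIio : (Set.Iio i).ncard = i := by
      rw [← Finset.coe_range, Set.ncard_coe_finset, Finset.card_range]
    rw [hIio] at key
    exact key
  · rintro ⟨x, y⟩ ⟨hx, hy, h⟩
    simp only [Set.mem_Iio]
    have hx2 : x < b * i := by nlinarith
    rw [Nat.div_lt_iff_lt_mul hb0]
    calc x - 1 < b * i := by omega
    _ = i * b := by ring
  · rintro ⟨x, y⟩ ⟨hx, hy, h⟩ ⟨x', y'⟩ ⟨hx', hy', h'⟩ heq
    simp only at heq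
    have hmod : x ≡ x' [MOD b] := by
      have h1 : a * x ≡ a * x' [MOD b] := by
        unfold Nat.ModEq
        calc a * x % b = (a * x + b * y) % b := by rw [Nat.add_mul_mod_self_left]
        _ = (a * x' + b * y') % b := by rw [← h, ← h']
        _ = a * x' % b := by rw [Nat.add_mul_mod_self_left]
      exact h1.cancel_left_of_coprime (Nat.coprime_comm.mp hab)
    have hxx : x = x' := div_eq_same_mod b x x' hb0 hx hx' hmod heq
    have : y = y' := by subst hxx; nlinarith
    simp [hxx, this]

lemma exists_rep (a b m : ℕ) (ha : 2 ≤ a) (hb : 2 ≤ b) (hab : Nat.gcd a b = 1)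
    (hm : a * b < m) : ∃ x y : ℕ, 1 ≤ x ∧ x ≤ b ∧ 1 ≤ y ∧ m = a * x + b * y := by
  haveI : NeZero b := ⟨by omega⟩
  obtain ⟨x, hx1, hxb, hmodeq⟩ : ∃ x : ℕ, 1 ≤ x ∧ x ≤ b ∧ a * x ≡ m [MOD b] := by
    set z : ZMod b := (a : ZMod b)⁻¹ * (m : ZMod b) with hz
    have haz : (a : ZMod b) * z = (m : ZMod b) := by
      rw [hz, ← mul_assoc, ZMod.coe_mul_inv_eq_one a hab, one_mul]
    have hvz : ((z.val : ℕ) : ZMod b) = z := by rw [ZMod.natCast_val, ZMod.cast_id]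
    rcases Nat.eq_zero_or_pos z.val with h0 | hpos
    · refine ⟨b, by omega, le_refl b, ?_⟩
      have hz0 : z = 0 := by rw [← hvz, h0]; simp
      rw [hz0] at haz
      simp at haz
      have : ((a * b : ℕ) : ZMod b) = ((m : ℕ) : ZMod b) := by push_cast; simp [← haz]
      exact (ZMod.natCast_eq_natCast_iff _ _ _).mp this
    · refine ⟨z.val, hpos, le_of_lt (ZMod.val_lt z), ?_⟩
      have : ((a * z.val : ℕ) : ZMod b) = ((m : ℕ) : ZMod b) := by
        push_cast
        rw [hvz, haz]
      exact (ZMod.natCast_eq_natCast_iff _ _ _).mp this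
  have hax : a * x ≤ a * b := Nat.mul_le_mul_left a hxb
  have hdvd : b ∣ m - a * x := (Nat.modEq_iff_dvd' (by omega)).mp hmodeq
  obtain ⟨y, hy⟩ := hdvd
  have hy1 : 1 ≤ y := by
    rcases Nat.eq_zero_or_pos y with h0 | h
    · subst h0
      simp at hy
      omega
    · exact h
  exact ⟨x, y, hx1, hxb, hy1, by omega⟩

lemma ell_step (a b m : ℕ) (ha : 2 ≤ a) (hb : 2 ≤ b) (hab : Nat.gcd a b = 1)
    (hm : a * b < m) : ell a b (m - a * b) + 1 ≤ ell a b m := by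
  obtain ⟨x0, y0, hx01, hx0b, hy01, hrep⟩ := exists_rep a b m ha hb hab hm
  set S := {p : ℕ × ℕ | 0 < p.1 ∧ 0 < p.2 ∧ m = a * p.1 + b * p.2} with hS
  set S' := {p : ℕ × ℕ | 0 < p.1 ∧ 0 < p.2 ∧ m - a * b = a * p.1 + b * p.2} with hS'
  set T := (fun p : ℕ × ℕ => (p.1 + b, p.2)) '' S' with hT
  have hinj : Function.Injective (fun p : ℕ × ℕ => (p.1 + b, p.2)) := by
    rintro ⟨x, y⟩ ⟨x', y'⟩ h
    simp only [Prod.mk.injEq] at h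
    simp [Prod.ext_iff]
    omega
  have hTS : T ⊆ S := by
    rintro ⟨u, v⟩ ⟨⟨x, y⟩, hmem, heq⟩
    simp only [hS', Set.mem_setOf_eq] at hmem
    simp only [Prod.mk.injEq] at heq
    obtain ⟨hx, hy, hsum⟩ := hmem
    obtain ⟨h1, h2⟩ := heq
    subst h1; subst h2
    simp only [hS, Set.mem_setOf_eq]
    refine ⟨by omega, by omega, ?_⟩
    have hring : a * (x + b) + b * y = a * x + b * y + a * b := by ring
    omega
  have hx0T : (x0, y0) ∉ T := by
    rintro ⟨⟨x, y⟩, hmem, heq⟩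
    simp only [hS', Set.mem_setOf_eq] at hmem
    simp only [Prod.mk.injEq] at heq
    omega
  have hins : insert (x0, y0) T ⊆ S := by
    rw [Set.insert_subset_iff]
    refine ⟨?_, hTS⟩
    simp only [hS, Set.mem_setOf_eq]
    exact ⟨by omega, by omega, hrep⟩
  have hSfin : S.Finite := sol_finite a b m ha hb
  have hTfin : T.Finite := hSfin.subset hTS
  have h1 : (insert (x0, y0) T).ncard ≤ S.ncard := Set.ncard_le_ncard hins hSfin
  rw [Set.ncard_insert_of_notMem hx0T hTfin] at h1
  rw [hT, Set.ncard_image_of_injective _ hinj] at h1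
  exact h1

lemma le_ell (a b : ℕ) (ha : 2 ≤ a) (hb : 2 ≤ b) (hab : Nat.gcd a b = 1) :
    ∀ i m : ℕ, a * b * i < m → i ≤ ell a b m := by
  intro i
  induction i with
  | zero => intro m _; exact Nat.zero_le _
  | succ n ih =>
    intro m hm
    have hab1 : a * b < m := by nlinarith
    have hmm : a * b * n < m - a * b := by
      have : a * b * (n + 1) = a * b * n + a * b := by ring
      omega
    have := ell_step a b m ha hb hab hab1
    have := ih (m - a * b) hmm
    omega

theorem set_ell_lt_eq_diff (a b : ℕ) (ha : 2 ≤ a) (hb : 2 ≤ b)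
    (hab : Nat.gcd a b = 1) (i : ℕ) (hi : 1 ≤ i) :
    {m : ℕ | 1 ≤ m ∧ ell a b m < i} =
      Set.Icc 1 (a * b * i) \ {m : ℕ | 1 ≤ m ∧ m ≤ a * b * i ∧ ell a b m = i} := by
  ext m
  simp only [Set.mem_setOf_eq, Set.mem_diff, Set.mem_Icc]
  constructor
  · rintro ⟨h1, hlt⟩
    have hle : m ≤ a * b * i := by
      by_contra h
      have := le_ell a b ha hb hab i m (by omega)
      omega
    exact ⟨⟨h1, hle⟩, by rintro ⟨_, _, heq⟩; omega⟩
  · rintro ⟨⟨h1, h2⟩, hnot⟩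
    have hle : ell a b m ≤ i := ell_le a b m i ha hb hab h2
    refine ⟨h1, ?_⟩
    rcases Nat.lt_or_ge (ell a b m) i with h | h
    · exact h
    · exact absurd ⟨h1, h2, by omega⟩ hnot
end

section
/- Let a, b ≥ 2 be coprime natural numbers and let i ≥ 1. Then the set {m ∈ ℕ : m ≥ 1 and ℓ(a,b,m) < i} is finite and has cardinality a·b·i − (a−1)(b−1)/2. (Here (a−1)(b−1) is even since a and b are coprime.) -/
open scoped Classical

/-- Finset of positive representations. -/
def repF (a b m : ℕ) : Finset (ℕ × ℕ) :=
  (Finset.Icc 1 m ×ˢ Finset.Icc 1 m).filter (fun p => m = a * p.1 + b * p.2)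

lemma mem_repF {a b m : ℕ} (ha : 1 ≤ a) (hb : 1 ≤ b) {p : ℕ × ℕ} :
    p ∈ repF a b m ↔ 0 < p.1 ∧ 0 < p.2 ∧ m = a * p.1 + b * p.2 := by
  obtain ⟨x, y⟩ := p
  simp only [repF, Finset.mem_filter, Finset.mem_product, Finset.mem_Icc]
  constructor
  · rintro ⟨⟨⟨h1, -⟩, ⟨h2, -⟩⟩, h⟩; exact ⟨h1, h2, h⟩
  · rintro ⟨h1, h2, h⟩
    refine ⟨⟨⟨h1, ?_⟩, ⟨h2, ?_⟩⟩, h⟩ <;> nlinarith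

lemma ell_eq (a b m : ℕ) (ha : 1 ≤ a) (hb : 1 ≤ b) :
    ell a b m = (repF a b m).card := by
  rw [ell, ← Set.ncard_coe_finset]
  congr 1
  ext p
  simp only [Set.mem_setOf_eq, Finset.coe_filter, Set.mem_setOf_eq, Finset.mem_coe,
    mem_repF ha hb]


lemma exists_mod_sol {a b : ℕ} (hb : 2 ≤ b) (hab : Nat.Coprime a b) (m : ℕ) :
    ∃ x, x < b ∧ a * x ≡ m [MOD b] := by
  haveI : NeZero b := ⟨by omega⟩
  set u := ZMod.unitOfCoprime a hab with hu
  set z : ZMod b := ((u⁻¹ : (ZMod b)ˣ) : ZMod b) * (m : ℕ) with hz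
  refine ⟨z.val, ZMod.val_lt z, ?_⟩
  have : ((a * z.val : ℕ) : ZMod b) = ((m : ℕ) : ZMod b) := by
    push_cast
    rw [ZMod.natCast_val, ZMod.cast_id]
    rw [hz, ← mul_assoc]
    have ha' : (a : ZMod b) = (u : ZMod b) := (ZMod.coe_unitOfCoprime a hab).symm
    rw [ha']
    rw [← Units.val_mul, mul_inv_cancel, Units.val_one, one_mul]
  exact (ZMod.natCast_eq_natCast_iff _ _ _).mp this

-- cancel coprime in ModEq, and rigidity in window of length b
lemma modeq_window {a b x y : ℕ} (hab : Nat.Coprime a b)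
    (h : a * x ≡ a * y [MOD b]) (hx1 : 1 ≤ x) (hxb : x ≤ b) (hy1 : 1 ≤ y) (hyb : y ≤ b) :
    x = y := by
  have h' : x ≡ y [MOD b] := h.cancel_left_of_coprime (Nat.Coprime.symm hab)
  rcases le_total x y with hle | hle
  · have : b ∣ y - x := (Nat.modEq_iff_dvd' hle).mp h'
    have h2 : y - x < b := by omega
    have := Nat.eq_zero_of_dvd_of_lt this h2
    omega
  · have : b ∣ x - y := (Nat.modEq_iff_dvd' hle).mp h'.symm
    have h2 : x - y < b := by omega
    have := Nat.eq_zero_of_dvd_of_lt this h2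
    omega
lemma repF_shift {a b : ℕ} (ha : 2 ≤ a) (hb : 2 ≤ b) (hab : Nat.Coprime a b) {m : ℕ} (hm : 1 ≤ m) :
    (repF a b (m + a * b)).card = (repF a b m).card + 1 := by
  have ha1 : 1 ≤ a := by omega
  have hb1 : 1 ≤ b := by omega
  set M := m + a * b with hM
  -- the unique representation with first coordinate ≤ b
  obtain ⟨x0, hx0b, hx0⟩ := exists_mod_sol hb hab M
  have hx0' : a * x0 ≡ M [MOD b] := hx0
  -- replace x0 = 0 by b
  set i0 := if x0 = 0 then b else x0 with hi0
  have hi01 : 1 ≤ i0 := by rw [hi0]; split <;> omega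
  have hi0b : i0 ≤ b := by rw [hi0]; split <;> omega
  have hi0mod : a * i0 ≡ M [MOD b] := by
    rw [hi0]; split
    · rename_i h; subst h
      calc a * b ≡ 0 [MOD b] := (Nat.modEq_zero_iff_dvd).mpr ⟨a, mul_comm a b⟩
        _ = a * 0 := by ring
        _ ≡ M [MOD b] := by simpa using hx0'
    · exact hx0'
  have hai0 : a * i0 < M := by
    have : a * i0 ≤ a * b := Nat.mul_le_mul_left a hi0b
    omega
  have hdvd : b ∣ M - a * i0 := by
    have := (Nat.modEq_iff_dvd' (by omega : a * i0 ≤ M)).mp hi0mod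
    exact this
  obtain ⟨j0, hj0⟩ := hdvd
  have hj01 : 1 ≤ j0 := by
    rcases Nat.eq_zero_or_pos j0 with h | h
    · subst h; omega
    · exact h
  have hMeq : M = a * i0 + b * j0 := by omega
  -- split the representation set
  rw [← Finset.card_filter_add_card_filter_not
      (s := repF a b M) (p := fun p => p.1 ≤ b)]
  have h1 : (repF a b M).filter (fun p => p.1 ≤ b) = {(i0, j0)} := by
    ext ⟨x, y⟩
    simp only [Finset.mem_filter, mem_repF ha1 hb1, Finset.mem_singleton, Prod.mk.injEq]
    constructor
    · rintro ⟨⟨hx, hy, hxy⟩, hxb⟩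
      have hmod : a * x ≡ a * i0 [MOD b] := by
        have h1 : a * x ≡ M [MOD b] := by
          have : M = a * x + b * y := hxy
          calc a * x ≡ a * x + b * y [MOD b] := by
                have : b * y ≡ 0 [MOD b] := (Nat.modEq_zero_iff_dvd).mpr ⟨y, rfl⟩
                simpa using (Nat.ModEq.refl (a*x)).add this.symm
            _ = M := this.symm
        exact h1.trans hi0mod.symm
      have hxi : x = i0 := modeq_window hab hmod hx hxb hi01 hi0b
      subst hxi
      have : b * y = b * j0 := by omega
      have : y = j0 := Nat.eq_of_mul_eq_mul_left (by omega) this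
      exact ⟨rfl, this⟩
    · rintro ⟨rfl, rfl⟩
      exact ⟨⟨hi01, hj01, hMeq⟩, hi0b⟩
  have h2 : (repF a b M).filter (fun p => ¬ p.1 ≤ b) =
      (repF a b m).image (fun p => (p.1 + b, p.2)) := by
    ext ⟨x, y⟩
    simp only [Finset.mem_filter, mem_repF ha1 hb1, Finset.mem_image, Prod.mk.injEq, not_le]
    constructor
    · rintro ⟨⟨hx, hy, hxy⟩, hxb⟩
      refine ⟨(x - b, y), ⟨by omega, hy, ?_⟩, by simp; omega⟩
      show m = a * (x - b) + b * y
      have h3 : a * (x - b) = a * x - a * b := Nat.mul_sub a x b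
      have hax : a * b ≤ a * x := Nat.mul_le_mul_left a (by omega)
      omega
    · rintro ⟨⟨u, v⟩, ⟨hu, hv, huv⟩, h1, h2⟩
      subst h1; subst h2
      refine ⟨⟨by omega, hv, ?_⟩, by omega⟩
      rw [Nat.mul_add]
      omega
  rw [h1, h2, Finset.card_image_of_injective _ (by intro p q h; simpa [Prod.ext_iff] using h)]
  simp [add_comm]

lemma repF_card_le_one {a b : ℕ} (ha : 2 ≤ a) (hb : 2 ≤ b) (hab : Nat.Coprime a b) {r : ℕ}
    (hr : r ≤ a * b) : (repF a b r).card ≤ 1 := by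
  have ha1 : 1 ≤ a := by omega
  have hb1 : 1 ≤ b := by omega
  apply Finset.card_le_one.mpr
  rintro ⟨x, y⟩ hp ⟨x', y'⟩ hq
  rw [mem_repF ha1 hb1] at hp hq
  dsimp only at hp hq
  obtain ⟨hx, hy, hxy⟩ := hp
  obtain ⟨hx', hy', hxy'⟩ := hq
  have hxb : x ≤ b := by
    by_contra h
    have : a * x ≥ a * (b + 1) := Nat.mul_le_mul_left a (by omega)
    have : a * (b+1) = a * b + a := by ring
    have hby : b * y ≥ b := Nat.le_mul_of_pos_right b hy
    omega
  have hxb' : x' ≤ b := by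
    by_contra h
    have : a * x' ≥ a * (b + 1) := Nat.mul_le_mul_left a (by omega)
    have : a * (b+1) = a * b + a := by ring
    have hby : b * y' ≥ b := Nat.le_mul_of_pos_right b hy'
    omega
  have hmod : a * x ≡ a * x' [MOD b] := by
    have e1 : a * x ≡ r [MOD b] := by
      have : b * y ≡ 0 [MOD b] := (Nat.modEq_zero_iff_dvd).mpr ⟨y, rfl⟩
      calc a * x ≡ a * x + b * y [MOD b] := by
            simpa using (Nat.ModEq.refl (a*x)).add this.symm
        _ = r := hxy.symm
    have e2 : a * x' ≡ r [MOD b] := by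
      have : b * y' ≡ 0 [MOD b] := (Nat.modEq_zero_iff_dvd).mpr ⟨y', rfl⟩
      calc a * x' ≡ a * x' + b * y' [MOD b] := by
            simpa using (Nat.ModEq.refl (a*x')).add this.symm
        _ = r := hxy'.symm
    exact e1.trans e2.symm
  have hxx : x = x' := modeq_window hab hmod hx hxb hx' hxb'
  subst hxx
  have : b * y = b * y' := by omega
  have : y = y' := Nat.eq_of_mul_eq_mul_left (by omega) this
  simp [this]

def rep (a b n : ℕ) : Prop := ∃ x y : ℕ, n = a * x + b * y


/-- Not both `n` and `F - n` are representable. -/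
lemma not_rep_both {a b : ℕ} (ha : 2 ≤ a) (hb : 2 ≤ b) (hab : Nat.Coprime a b) {n n' : ℕ}
    (hsum : n + n' = a * b - a - b) (h1 : rep a b n) (h2 : rep a b n') : False := by
  obtain ⟨x, y, hxy⟩ := h1
  obtain ⟨x', y', hxy'⟩ := h2
  have hab' : a + b ≤ a * b := by nlinarith
  have key : a * b = a * (x + x' + 1) + b * (y + y' + 1) := by
    have : a * (x + x' + 1) + b * (y + y' + 1) = (a*x + b*y) + (a*x' + b*y') + a + b := by ring
    omega
  have hbd : b ∣ x + x' + 1 := by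
    have h1 : b ∣ a * (x + x' + 1) := by
      have e : a * (x + x' + 1) = a * b - b * (y + y' + 1) := by omega
      rw [e]; exact Nat.dvd_sub ⟨a, mul_comm a b⟩ ⟨_, rfl⟩
    exact (Nat.Coprime.dvd_of_dvd_mul_left (Nat.Coprime.symm hab) h1)
  have had : a ∣ y + y' + 1 := by
    have h1 : a ∣ b * (y + y' + 1) := by
      have e : b * (y + y' + 1) = a * b - a * (x + x' + 1) := by omega
      rw [e]; exact Nat.dvd_sub ⟨b, rfl⟩ ⟨_, rfl⟩
    exact (Nat.Coprime.dvd_of_dvd_mul_left hab h1)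
  have hxb : b ≤ x + x' + 1 := Nat.le_of_dvd (by omega) hbd
  have hya : a ≤ y + y' + 1 := Nat.le_of_dvd (by omega) had
  nlinarith [Nat.mul_le_mul_left a hxb, Nat.mul_le_mul_left b hya]

lemma rep_or {a b : ℕ} (ha : 2 ≤ a) (hb : 2 ≤ b) (hab : Nat.Coprime a b) {n : ℕ}
    (hn : n ≤ a * b - a - b) : rep a b n ∨ rep a b (a * b - a - b - n) := by
  obtain ⟨x0, hx0b, hx0⟩ := exists_mod_sol hb hab n
  rcases le_or_gt (a * x0) n with hle | hlt
  · left
    have hdvd : b ∣ n - a * x0 := (Nat.modEq_iff_dvd' hle).mp hx0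
    obtain ⟨y, hy⟩ := hdvd
    exact ⟨x0, y, by omega⟩
  · right
    have hdvd : b ∣ a * x0 - n := (Nat.modEq_iff_dvd' (by omega)).mp hx0.symm
    obtain ⟨k, hk⟩ := hdvd
    have hk1 : 1 ≤ k := by
      rcases Nat.eq_zero_or_pos k with h | h
      · subst h; omega
      · exact h
    refine ⟨b - 1 - x0, k - 1, ?_⟩
    have e1 : a * (b - 1 - x0) = a * b - a - a * x0 := by
      have h1 : a * (b - 1 - x0) + a * x0 + a = a * b := by
        have : (b - 1 - x0) + x0 + 1 = b := by omega
        calc a * (b - 1 - x0) + a * x0 + a = a * ((b - 1 - x0) + x0 + 1) := by ring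
          _ = a * b := by rw [this]
      omega
    have e2 : b * (k - 1) = b * k - b := by
      have : b * (k - 1) + b = b * k := by
        have h : (k - 1) + 1 = k := by omega
        calc b * (k - 1) + b = b * ((k-1) + 1) := by ring
          _ = b * k := by rw [h]
      omega
    have hax2 : a * x0 ≤ a * (b - 1) := Nat.mul_le_mul_left a (by omega)
    have hax3 : a * (b - 1) = a * b - a := by
      rw [Nat.mul_sub, mul_one]
    have hab' : a + b ≤ a * b := by nlinarith
    rw [e1, e2]
    have hbk : b ≤ b * k := Nat.le_mul_of_pos_right b hk1
    omega

lemma two_mul_repcount {a b : ℕ} (ha : 2 ≤ a) (hb : 2 ≤ b) (hab : Nat.Coprime a b) :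
    2 * ((Finset.range (a * b - a - b + 1)).filter (rep a b)).card
      = a * b - a - b + 1 := by
  set F := a * b - a - b with hF
  have key : ((Finset.range (F + 1)).filter (rep a b)).card
      = ((Finset.range (F + 1)).filter (fun n => ¬ rep a b n)).card := by
    apply Finset.card_bij' (fun n _ => F - n) (fun n _ => F - n)
    · intro n hn
      simp only [Finset.mem_filter, Finset.mem_range] at hn ⊢
      refine ⟨by omega, fun hrep => not_rep_both ha hb hab (by omega) hn.2 hrep⟩
    · intro n hn
      simp only [Finset.mem_filter, Finset.mem_range] at hn ⊢
      refine ⟨by omega, ?_⟩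
      rcases rep_or ha hb hab (show F - n ≤ F by omega) with h | h
      · exact h
      · exfalso; apply hn.2; rwa [show F - (F - n) = n by omega] at h
    · intro n hn
      simp only [Finset.mem_filter, Finset.mem_range] at hn
      omega
    · intro n hn
      simp only [Finset.mem_filter, Finset.mem_range] at hn
      omega
  have total := Finset.card_filter_add_card_filter_not
    (s := Finset.range (F + 1)) (p := rep a b)
  rw [Finset.card_range] at total
  omega

-- `1 ≤ ell r` iff `r` has a positive representation
lemma one_le_ell_iff {a b : ℕ} (ha : 2 ≤ a) (hb : 2 ≤ b) {r : ℕ} :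
    1 ≤ ell a b r ↔ ∃ x y, 1 ≤ x ∧ 1 ≤ y ∧ r = a * x + b * y := by
  rw [ell_eq a b r (by omega) (by omega), Nat.one_le_iff_ne_zero,
    ← Nat.pos_iff_ne_zero, Finset.card_pos]
  constructor
  · rintro ⟨⟨x, y⟩, hp⟩
    rw [mem_repF (by omega) (by omega)] at hp
    exact ⟨x, y, hp.1, hp.2.1, hp.2.2⟩
  · rintro ⟨x, y, hx, hy, hxy⟩
    exact ⟨(x, y), (mem_repF (by omega) (by omega)).mpr ⟨hx, hy, hxy⟩⟩

-- count of r in [1, ab] with 1 ≤ ell r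
lemma count_pos_ell {a b : ℕ} (ha : 2 ≤ a) (hb : 2 ≤ b) (hab : Nat.Coprime a b) :
    2 * ((Finset.Icc 1 (a * b)).filter (fun r => 1 ≤ ell a b r)).card
      = a * b - a - b + 1 := by
  rw [← two_mul_repcount ha hb hab]
  congr 1
  apply Finset.card_bij' (fun r _ => r - (a + b)) (fun n _ => n + (a + b))
  · intro r hr
    simp only [Finset.mem_filter, Finset.mem_Icc] at hr
    obtain ⟨⟨hr1, hr2⟩, hell⟩ := hr
    obtain ⟨x, y, hx, hy, hxy⟩ := (one_le_ell_iff ha hb).mp hell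
    simp only [Finset.mem_filter, Finset.mem_range]
    have hax : a ≤ a * x := Nat.le_mul_of_pos_right a hx
    have hby : b ≤ b * y := Nat.le_mul_of_pos_right b hy
    constructor
    · omega
    · refine ⟨x - 1, y - 1, ?_⟩
      have e1 : a * (x - 1) = a * x - a := by rw [Nat.mul_sub, mul_one]
      have e2 : b * (y - 1) = b * y - b := by rw [Nat.mul_sub, mul_one]
      omega
  · intro n hn
    simp only [Finset.mem_filter, Finset.mem_range] at hn
    obtain ⟨hn1, x, y, hxy⟩ := hn
    have hab' : a + b ≤ a * b := by nlinarith
    simp only [Finset.mem_filter, Finset.mem_Icc]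
    refine ⟨⟨by omega, by omega⟩, ?_⟩
    rw [one_le_ell_iff ha hb]
    exact ⟨x + 1, y + 1, by omega, by omega, by rw [Nat.mul_add, Nat.mul_add]; omega⟩
  · intro r hr
    simp only [Finset.mem_filter, Finset.mem_Icc] at hr
    obtain ⟨⟨hr1, hr2⟩, hell⟩ := hr
    obtain ⟨x, y, hx, hy, hxy⟩ := (one_le_ell_iff ha hb).mp hell
    have hax : a ≤ a * x := Nat.le_mul_of_pos_right a hx
    have hby : b ≤ b * y := Nat.le_mul_of_pos_right b hy
    omega
  · intro n hn
    omega

lemma ell_shift {a b : ℕ} (ha : 2 ≤ a) (hb : 2 ≤ b) (hab : Nat.Coprime a b) {m : ℕ} (hm : 1 ≤ m) :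
    ell a b (m + a * b) = ell a b m + 1 := by
  rw [ell_eq a b _ (by omega) (by omega), ell_eq a b _ (by omega) (by omega)]
  exact repF_shift ha hb hab hm

lemma ell_block {a b : ℕ} (ha : 2 ≤ a) (hb : 2 ≤ b) (hab : Nat.Coprime a b) (q : ℕ) {r : ℕ}
    (hr : 1 ≤ r) : ell a b (q * (a * b) + r) = q + ell a b r := by
  induction q with
  | zero => simp
  | succ n ih =>
    have h1 : (n + 1) * (a * b) + r = (n * (a * b) + r) + a * b := by ring
    rw [h1, ell_shift ha hb hab (by omega), ih]
    omega

lemma ell_le_one {a b : ℕ} (ha : 2 ≤ a) (hb : 2 ≤ b) (hab : Nat.Coprime a b) {r : ℕ}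
    (hr : r ≤ a * b) : ell a b r ≤ 1 := by
  rw [ell_eq a b _ (by omega) (by omega)]
  exact repF_card_le_one ha hb hab hr

theorem card_ell_lt (a b : ℕ) (ha : 2 ≤ a) (hb : 2 ≤ b)
    (hab : Nat.gcd a b = 1) (i : ℕ) (hi : 1 ≤ i) :
    {m : ℕ | 1 ≤ m ∧ ell a b m < i}.Finite ∧
      {m : ℕ | 1 ≤ m ∧ ell a b m < i}.ncard = a * b * i - (a - 1) * (b - 1) / 2 := by
  have hab' : Nat.Coprime a b := hab
  have hD : 0 < a * b := by positivity
  have ecomm : a * b * i = i * (a * b) := by ring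
  have esub : (i - 1) * (a * b) = i * (a * b) - a * b := by rw [Nat.sub_mul, one_mul]
  have hDle : a * b ≤ i * (a * b) := Nat.le_mul_of_pos_left (a * b) (by omega)
  have decomp : ∀ m : ℕ, 1 ≤ m → ∃ q r, 1 ≤ r ∧ r ≤ a * b ∧ m = q * (a * b) + r := by
    intro m hm
    refine ⟨(m - 1) / (a * b), (m - 1) % (a * b) + 1, ?_, ?_, ?_⟩
    · omega
    · have := Nat.mod_lt (m - 1) hD; omega
    · have h1 := Nat.div_add_mod (m - 1) (a * b)
      have h3 : (m - 1) / (a * b) * (a * b) = (a * b) * ((m - 1) / (a * b)) := mul_comm _ _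
      omega
  set T := (Finset.Icc 1 (a * b * i)).filter (fun m => ell a b m < i) with hT
  have hset : {m : ℕ | 1 ≤ m ∧ ell a b m < i} = ↑T := by
    ext m
    simp only [Set.mem_setOf_eq, hT, Finset.coe_filter, Set.mem_setOf_eq, Finset.mem_Icc]
    constructor
    · rintro ⟨hm, hell⟩
      refine ⟨⟨hm, ?_⟩, hell⟩
      obtain ⟨q, r, h1, h2, h3⟩ := decomp m hm
      have hellm : ell a b m = q + ell a b r := by
        rw [h3]; exact ell_block ha hb hab' q h1
      have hq : q ≤ i - 1 := by omega
      have : q * (a * b) ≤ (i - 1) * (a * b) := Nat.mul_le_mul_right (a * b) hq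
      omega
    · rintro ⟨⟨hm, _⟩, hell⟩
      exact ⟨hm, hell⟩
  constructor
  · rw [hset]; exact T.finite_toSet
  rw [hset, Set.ncard_coe_finset]
  set P := (Finset.range i ×ˢ Finset.Icc 1 (a * b)).filter
    (fun p => p.1 + ell a b p.2 < i) with hP
  have hcard : T.card = P.card := by
    symm
    apply Finset.card_bij (fun p _ => p.1 * (a * b) + p.2)
    · rintro ⟨q, r⟩ hp
      simp only [hP, Finset.mem_filter, Finset.mem_product, Finset.mem_range,
        Finset.mem_Icc] at hp
      obtain ⟨⟨hq, hr1, hr2⟩, hell⟩ := hp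
      simp only [hT, Finset.mem_filter, Finset.mem_Icc]
      have hellm : ell a b (q * (a * b) + r) = q + ell a b r :=
        ell_block ha hb hab' q hr1
      have hle : q * (a * b) ≤ (i - 1) * (a * b) := Nat.mul_le_mul_right _ (by omega)
      exact ⟨⟨by omega, by omega⟩, by omega⟩
    · rintro ⟨q, r⟩ hp ⟨q', r'⟩ hp' heq
      simp only [hP, Finset.mem_filter, Finset.mem_product, Finset.mem_range,
        Finset.mem_Icc] at hp hp'
      obtain ⟨⟨hq, hr1, hr2⟩, -⟩ := hp
      obtain ⟨⟨hq', hr1', hr2'⟩, -⟩ := hp'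
      simp only at heq
      have hqq : q = q' := by
        by_contra hne
        rcases Nat.lt_or_ge q q' with h | h
        · have : (q + 1) * (a * b) ≤ q' * (a * b) := Nat.mul_le_mul_right _ (by omega)
          have e : (q + 1) * (a * b) = q * (a * b) + a * b := by ring
          omega
        · have hlt : q' < q := by omega
          have : (q' + 1) * (a * b) ≤ q * (a * b) := Nat.mul_le_mul_right _ (by omega)
          have e : (q' + 1) * (a * b) = q' * (a * b) + a * b := by ring
          omega
      subst hqq
      have : r = r' := by omega
      simp [this]
    · intro m hm
      simp only [hT, Finset.mem_filter, Finset.mem_Icc] at hm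
      obtain ⟨⟨hm1, hm2⟩, hell⟩ := hm
      obtain ⟨q, r, h1, h2, h3⟩ := decomp m hm1
      have hellm : ell a b m = q + ell a b r := by
        rw [h3]; exact ell_block ha hb hab' q h1
      refine ⟨(q, r), ?_, h3.symm⟩
      simp only [hP, Finset.mem_filter, Finset.mem_product, Finset.mem_range, Finset.mem_Icc]
      exact ⟨⟨by omega, h1, h2⟩, by omega⟩
  set K := ((Finset.Icc 1 (a * b)).filter (fun r => 1 ≤ ell a b r)).card with hK
  obtain ⟨i', rfl⟩ : ∃ i', i = i' + 1 := ⟨i - 1, by omega⟩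
  have hPcard : P.card = i' * (a * b) + (a * b - K) := by
    rw [hP, Finset.card_filter, Finset.sum_product]
    rw [Finset.sum_range_succ]
    have hmain : ∀ q ∈ Finset.range i',
        (∑ r ∈ Finset.Icc 1 (a * b), if q + ell a b r < i' + 1 then 1 else 0)
          = a * b := by
      intro q hq
      rw [Finset.mem_range] at hq
      have hc : ∀ r ∈ Finset.Icc 1 (a * b),
          (if q + ell a b r < i' + 1 then 1 else 0) = 1 := by
        intro r hr
        rw [Finset.mem_Icc] at hr
        have := ell_le_one ha hb hab' hr.2
        rw [if_pos (by omega)]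
      rw [Finset.sum_congr rfl hc, Finset.sum_const, smul_eq_mul, mul_one, Nat.card_Icc]
      omega
    rw [Finset.sum_congr rfl hmain, Finset.sum_const, smul_eq_mul, Finset.card_range]
    have hlast : (∑ r ∈ Finset.Icc 1 (a * b),
        if i' + ell a b r < i' + 1 then 1 else 0) = a * b - K := by
      rw [Finset.card_filter (fun r => 1 ≤ ell a b r)] at hK
      have hco : ∀ r ∈ Finset.Icc 1 (a * b),
          (if i' + ell a b r < i' + 1 then 1 else 0)
            = 1 - (if 1 ≤ ell a b r then 1 else 0) := by
        intro r hr
        by_cases h : 1 ≤ ell a b r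
        · rw [if_neg (by omega), if_pos h]
        · rw [if_pos (by omega), if_neg h]
      rw [Finset.sum_congr rfl hco]
      rw [Finset.sum_tsub_distrib, Finset.sum_const, smul_eq_mul, mul_one, Nat.card_Icc,
        ← hK]
      · omega
      · intro r hr
        split <;> omega
    rw [hlast]
  have h2K : 2 * K = a * b - a - b + 1 := by
    rw [hK]; exact count_pos_ell ha hb hab'
  have hprod : (a - 1) * (b - 1) = a * b - a - b + 1 := by
    obtain ⟨a', rfl⟩ : ∃ a', a = a' + 2 := ⟨a - 2, by omega⟩
    obtain ⟨b', rfl⟩ : ∃ b', b = b' + 2 := ⟨b - 2, by omega⟩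
    have e : (a' + 2) * (b' + 2) = a' * b' + 2 * a' + 2 * b' + 4 := by ring
    have e2 : (a' + 2 - 1) * (b' + 2 - 1) = a' * b' + a' + b' + 1 := by
      have h1 : a' + 2 - 1 = a' + 1 := by omega
      have h2 : b' + 2 - 1 = b' + 1 := by omega
      rw [h1, h2]; ring
    omega
  have hKle : K ≤ a * b := by
    rw [hK]
    calc ((Finset.Icc 1 (a * b)).filter (fun r => 1 ≤ ell a b r)).card
        ≤ (Finset.Icc 1 (a * b)).card := Finset.card_filter_le _ _
      _ = a * b := by rw [Nat.card_Icc]; omega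
  have hKdiv : (a - 1) * (b - 1) / 2 = K := by omega
  rw [hcard, hPcard, hKdiv]
  have e1 : i' * (a * b) = (i' + 1) * (a * b) - a * b := by
    rw [Nat.add_mul, one_mul]; omega
  have e2 : a * b * (i' + 1) = (i' + 1) * (a * b) := by ring
  have e3 : a * b ≤ (i' + 1) * (a * b) := Nat.le_mul_of_pos_left _ (by omega)
  omega
end

section
/- Let a, b ≥ 2 be coprime natural numbers and let i ≥ 1. Then (∏ over the finite set of m ≥ 1 with ℓ(a,b,m) < i of m) · M_i = (a·b·i)!, where M_i denotes the product of all natural numbers m with 1 ≤ m ≤ a·b·i and ℓ(a,b,m) = i. Equivalently, (a·b·i)!/M_i = ∏_{ℓ(a,b,k) < i} k. -/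
def posReprs (a b m : ℕ) : Set (ℕ × ℕ) :=
  {p | 0 < p.1 ∧ 0 < p.2 ∧ m = a * p.1 + b * p.2}

theorem ell_eq_ncard_posReprs (a b m : ℕ) : ell a b m = (posReprs a b m).ncard := rfl

section

variable {a b : ℕ}

theorem posReprs_finite (ha : 0 < a) (hb : 0 < b) (m : ℕ) : (posReprs a b m).Finite := by
  refine ((Set.finite_Iic m).prod (Set.finite_Iic m)).subset ?_
  rintro ⟨x, y⟩ ⟨-, -, hm⟩
  exact ⟨(Nat.le_mul_of_pos_left x ha).trans (by simp only at hm; omega),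
    (Nat.le_mul_of_pos_left y hb).trans (by simp only at hm; omega)⟩

theorem eq_of_mem_posReprs_of_fst_le (hab : Nat.Coprime a b) {m : ℕ} {p q : ℕ × ℕ}
    (hp : p ∈ posReprs a b m) (hq : q ∈ posReprs a b m) (hpb : p.1 ≤ b) (hqb : q.1 ≤ b) :
    p = q := by
  obtain ⟨hp1, -, hpm⟩ := hp
  obtain ⟨hq1, -, hqm⟩ := hq
  have hm : (a * q.1 + b * q.2 : ℤ) = a * p.1 + b * p.2 := by exact_mod_cast hqm.symm.trans hpm
  have hdvd : (b : ℤ) ∣ a * ((p.1 : ℤ) - q.1) := ⟨(q.2 : ℤ) - p.2, by linear_combination -hm⟩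
  have hfst : p.1 = q.1 := by
    have := Int.eq_zero_of_abs_lt_dvd
      ((Nat.isCoprime_iff_coprime.2 hab.symm).dvd_of_dvd_mul_left hdvd)
      (abs_sub_lt_iff.2 ⟨by omega, by omega⟩)
    omega
  rw [hfst] at hpm
  exact Prod.ext hfst
    (Nat.eq_of_mul_eq_mul_left (by omega : 0 < b) (by omega : b * p.2 = b * q.2))

theorem exists_mem_posReprs_add_mul_fst_le (hb : 0 < b) (hab : Nat.Coprime a b) {m : ℕ}
    (hm : 0 < m) : ∃ p ∈ posReprs a b (m + a * b), p.1 ≤ b := by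
  -- The first coordinate is `x + 1` with `a * x ≡ m - a [MOD b]`; the residue `m - a` is
  -- written as `m + (b - 1) * a` to stay in `ℕ`.
  obtain ⟨x, hxb, hx⟩ := Nat.exists_mul_mod_eq_of_coprime (m + (b - 1) * a) hab hb.ne'
  have hax : a * x ≤ (b - 1) * a := by rw [mul_comm]; exact Nat.mul_le_mul_right a (by omega)
  have hab' : (b - 1) * a + a = a * b := by
    rw [← Nat.succ_mul, Nat.succ_eq_add_one, Nat.sub_add_cancel hb, mul_comm]
  obtain ⟨y, hy⟩ : b ∣ m + (b - 1) * a - a * x :=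
    Nat.dvd_of_mod_eq_zero (Nat.sub_mod_eq_zero_of_mod_eq hx.symm)
  refine ⟨(x + 1, y), ⟨x.succ_pos, Nat.pos_of_ne_zero ?_, ?_⟩, hxb⟩
  · rintro rfl
    omega
  · simp only [mul_add, mul_one]
    omega

theorem ell_add_mul (ha : 0 < a) (hb : 0 < b) (hab : Nat.Coprime a b) {m : ℕ} (hm : 0 < m) :
    ell a b (m + a * b) = ell a b m + 1 := by
  obtain ⟨p₀, hp₀, hp₀b⟩ := exists_mem_posReprs_add_mul_fst_le hb hab hm
  set shift : ℕ × ℕ → ℕ × ℕ := Prod.map (· + b) id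
  have hshift : Function.Injective shift :=
    Prod.map_injective.2 ⟨add_left_injective b, Function.injective_id⟩
  have hsplit : posReprs a b (m + a * b) = insert p₀ (shift '' posReprs a b m) := by
    ext ⟨x, y⟩
    simp only [Set.mem_insert_iff, Set.mem_image, Prod.exists, shift, Prod.map, id,
      Prod.mk.injEq]
    constructor
    · intro hp
      by_cases hxb : x ≤ b
      · exact Or.inl (eq_of_mem_posReprs_of_fst_le hab hp hp₀ hxb hp₀b)
      · obtain ⟨-, hy, hxy⟩ := hp
        refine Or.inr ⟨x - b, y, ⟨by omega, hy, ?_⟩, by omega, rfl⟩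
        have : a * x = a * (x - b) + a * b := by rw [← mul_add, Nat.sub_add_cancel (by omega)]
        simp only at hxy ⊢
        omega
    · rintro (rfl | ⟨x, y, ⟨hx, hy, hxy⟩, rfl, rfl⟩)
      · exact hp₀
      · exact ⟨by omega, hy, by simp only at hxy ⊢; rw [hxy]; ring⟩
  have hp₀_notMem : p₀ ∉ shift '' posReprs a b m := by
    rintro ⟨p, hp, rfl⟩
    simp only [shift, Prod.map] at hp₀b
    exact absurd hp.1 (by omega)
  rw [ell_eq_ncard_posReprs, ell_eq_ncard_posReprs, hsplit,
    Set.ncard_insert_of_notMem hp₀_notMem ((posReprs_finite ha hb m).image shift),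
    Set.ncard_image_of_injective _ hshift]

theorem ell_le_one_of_le_mul (ha : 0 < a) (hb : 0 < b) (hab : Nat.Coprime a b) {m : ℕ}
    (hm : m ≤ a * b) : ell a b m ≤ 1 := by
  have fst_le : ∀ p ∈ posReprs a b m, p.1 ≤ b := fun p ⟨_, _, hpm⟩ =>
    Nat.le_of_mul_le_mul_left (by omega) ha
  exact (Set.ncard_le_one_iff (posReprs_finite ha hb m)).2 fun hp hq =>
    eq_of_mem_posReprs_of_fst_le hab hp hq (fst_le _ hp) (fst_le _ hq)

theorem ell_le_of_le_mul (ha : 0 < a) (hb : 0 < b) (hab : Nat.Coprime a b) {i m : ℕ}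
    (hm₀ : 0 < m) (hm : m ≤ a * b * i) : ell a b m ≤ i := by
  induction i generalizing m with
  | zero => omega
  | succ i ih =>
    rcases le_or_gt m (a * b) with hmab | hmab
    · exact (ell_le_one_of_le_mul ha hb hab hmab).trans (by omega)
    · rw [mul_add_one] at hm
      obtain ⟨k, rfl⟩ : ∃ k, m = k + a * b := ⟨m - a * b, by omega⟩
      rw [ell_add_mul ha hb hab (by omega)]
      exact Nat.succ_le_succ (ih (by omega) (by omega))

theorem le_ell_of_mul_lt (ha : 0 < a) (hb : 0 < b) (hab : Nat.Coprime a b) {i m : ℕ}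
    (hm : a * b * i < m) : i ≤ ell a b m := by
  induction i generalizing m with
  | zero => exact Nat.zero_le _
  | succ i ih =>
    rw [mul_add_one] at hm
    obtain ⟨k, rfl⟩ : ∃ k, m = k + a * b := ⟨m - a * b, by omega⟩
    rw [ell_add_mul ha hb hab (by omega)]
    exact Nat.succ_le_succ (ih (by omega))

end

theorem prod_ell_lt_mul_M_eq_factorial_general (a b : ℕ) (ha : 2 ≤ a) (hb : 2 ≤ b)
    (hab : Nat.gcd a b = 1) (i : ℕ)
    (hfin : {m : ℕ | 1 ≤ m ∧ ell a b m < i}.Finite) :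
    (∏ m ∈ hfin.toFinset, m) *
        (∏ m ∈ (Finset.Icc 1 (a * b * i)).filter (fun m => ell a b m = i), m) =
      Nat.factorial (a * b * i) := by
  have ha₀ : 0 < a := by omega
  have hb₀ : 0 < b := by omega
  have hlt : hfin.toFinset = (Finset.Icc 1 (a * b * i)).filter (fun m => ell a b m < i) := by
    ext m
    simp only [Set.Finite.mem_toFinset, Set.mem_ofPred_eq, Finset.mem_filter, Finset.mem_Icc]
    constructor
    · rintro ⟨hm, hlt⟩
      refine ⟨⟨hm, not_lt.1 fun hgt => ?_⟩, hlt⟩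
      exact (le_ell_of_mul_lt ha₀ hb₀ hab hgt).not_gt hlt
    · rintro ⟨⟨hm, -⟩, hlt⟩
      exact ⟨hm, hlt⟩
  have heq : (Finset.Icc 1 (a * b * i)).filter (fun m => ell a b m = i)
      = (Finset.Icc 1 (a * b * i)).filter (fun m => ¬ ell a b m < i) := by
    refine Finset.filter_congr fun m hm => ?_
    have := ell_le_of_le_mul ha₀ hb₀ hab (Finset.mem_Icc.1 hm).1 (Finset.mem_Icc.1 hm).2
    omega
  rw [hlt, heq, Finset.prod_filter_mul_prod_filter_not, ← Finset.Ico_add_one_right_eq_Icc,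
    Finset.prod_Ico_id_eq_factorial]

theorem prod_ell_lt_mul_M_eq_factorial (a b : ℕ) (ha : 2 ≤ a) (hb : 2 ≤ b)
    (hab : Nat.gcd a b = 1) (i : ℕ) (hi : 1 ≤ i)
    (hfin : {m : ℕ | 1 ≤ m ∧ ell a b m < i}.Finite) :
    (∏ m ∈ hfin.toFinset, m) *
        (∏ m ∈ (Finset.Icc 1 (a * b * i)).filter (fun m => ell a b m = i), m) =
      Nat.factorial (a * b * i) :=
  prod_ell_lt_mul_M_eq_factorial_general a b ha hb hab i hfin
end

section
/- Let a, b ≥ 2 be coprime natural numbers and let i ≥ 1. Then for every natural number k ≥ 1 one has ℓ(a,b,a·k) < i if and only if k ≤ b·i; in particular {k ≥ 1 : ℓ(a,b,a·k) < i} = {1, 2, …, b·i} and ∏_{ℓ(a,b,a·k) < i} k = (b·i)!. -/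
section
variable {a b : ℕ}

theorem exists_eq_of_mul_eq_mul_add_mul (ha : 0 < a) (hab : Nat.Coprime a b) {k x y : ℕ}
    (h : a * k = a * x + b * y) : ∃ t, y = a * t ∧ k = x + b * t := by
  have hdvd : a ∣ b * y := (Nat.dvd_add_right (dvd_mul_right a x)).mp (h ▸ dvd_mul_right a k)
  obtain ⟨t, rfl⟩ := hab.dvd_of_dvd_mul_left hdvd
  refine ⟨t, rfl, Nat.eq_of_mul_eq_mul_left ha ?_⟩
  rw [h]
  ring

theorem setOf_mul_eq_mul_add_mul (ha : 0 < a) (hb : 0 < b) (hab : Nat.Coprime a b) (k : ℕ) :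
    {p : ℕ × ℕ | 0 < p.1 ∧ 0 < p.2 ∧ a * k = a * p.1 + b * p.2} =
      (fun t => (k - b * t, a * t)) '' Set.Icc 1 ((k - 1) / b) := by
  ext ⟨x, y⟩
  simp only [Set.mem_ofPred_eq, Set.mem_image, Set.mem_Icc, Prod.mk.injEq,
    Nat.le_div_iff_mul_le hb]
  constructor
  · rintro ⟨hx, hy, h⟩
    obtain ⟨t, rfl, rfl⟩ := exists_eq_of_mul_eq_mul_add_mul ha hab h
    have ht : 0 < t := Nat.pos_of_mul_pos_left hy
    exact ⟨t, ⟨ht, by rw [Nat.mul_comm]; omega⟩, by omega, rfl⟩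
  · rintro ⟨t, ⟨ht, htk⟩, rfl, rfl⟩
    rw [Nat.mul_comm] at htk
    have hbt : 0 < b * t := Nat.mul_pos hb ht
    refine ⟨by omega, by positivity, ?_⟩
    rw [mul_left_comm, ← mul_add, Nat.sub_add_cancel (by omega)]

theorem ell_mul_left (ha : 0 < a) (hb : 0 < b) (hab : Nat.Coprime a b) (k : ℕ) :
    ell a b (a * k) = (k - 1) / b := by
  have hinj : (fun t => (k - b * t, a * t)).Injective := fun s t hst =>
    Nat.eq_of_mul_eq_mul_left ha (Prod.ext_iff.mp hst).2
  rw [ell, setOf_mul_eq_mul_add_mul ha hb hab, Set.ncard_image_of_injective _ hinj,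
    Set.ncard_Icc_nat]
  exact Nat.add_sub_cancel _ _

theorem ell_mul_left_lt_iff (ha : 0 < a) (hb : 0 < b) (hab : Nat.Coprime a b) {k : ℕ}
    (hk : 1 ≤ k) (i : ℕ) : ell a b (a * k) < i ↔ k ≤ b * i := by
  rw [ell_mul_left ha hb hab, Nat.div_lt_iff_lt_mul hb, mul_comm i b]
  omega

end

theorem ell_a_mul_lt_iff_general (a b : ℕ) (ha : 2 ≤ a) (hb : 2 ≤ b)
    (hab : Nat.gcd a b = 1) (i : ℕ) :
    (∀ k : ℕ, 1 ≤ k → (ell a b (a * k) < i ↔ k ≤ b * i)) ∧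
      {k : ℕ | 1 ≤ k ∧ ell a b (a * k) < i} = Set.Icc 1 (b * i) ∧
      ∏ k ∈ Finset.Icc 1 (b * i), k = Nat.factorial (b * i) := by
  have key (k : ℕ) (hk : 1 ≤ k) : ell a b (a * k) < i ↔ k ≤ b * i :=
    ell_mul_left_lt_iff (by omega) (by omega) hab hk i
  refine ⟨key, ?_, ?_⟩
  · ext k
    simp only [Set.mem_ofPred_eq, Set.mem_Icc]
    exact and_congr_right (key k)
  · rw [← Finset.Ico_add_one_right_eq_Icc]
    exact Finset.prod_Ico_id_eq_factorial (b * i)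

theorem ell_a_mul_lt_iff (a b : ℕ) (ha : 2 ≤ a) (hb : 2 ≤ b)
    (hab : Nat.gcd a b = 1) (i : ℕ) (hi : 1 ≤ i) :
    (∀ k : ℕ, 1 ≤ k → (ell a b (a * k) < i ↔ k ≤ b * i)) ∧
      {k : ℕ | 1 ≤ k ∧ ell a b (a * k) < i} = Set.Icc 1 (b * i) ∧
      ∏ k ∈ Finset.Icc 1 (b * i), k = Nat.factorial (b * i) :=
  ell_a_mul_lt_iff_general a b ha hb hab i
end

section
/- Let a, b ≥ 2 be coprime natural numbers and let m be a natural number with a ∤ m and b ∤ m. If m = a·i + b·j + a·b·r for natural numbers i, j, r with 1 ≤ i < b, 1 ≤ j < a and r ≥ 0, then ℓ(a,b,m) = r + 1. -/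
theorem ell_of_not_dvd_not_dvd (a b : ℕ) (ha : 2 ≤ a) (hb : 2 ≤ b)
    (hab : Nat.gcd a b = 1) (m : ℕ) (hma : ¬ a ∣ m) (hmb : ¬ b ∣ m)
    (i j r : ℕ) (hi1 : 1 ≤ i) (hib : i < b) (hj1 : 1 ≤ j) (hja : j < a)
    (hm : m = a * i + b * j + a * b * r) :
    ell a b m = r + 1 := by
  have hb0 : 0 < b := by omega
  have ha0 : 0 < a := by omega
  have hset : {p : ℕ × ℕ | 0 < p.1 ∧ 0 < p.2 ∧ m = a * p.1 + b * p.2}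
      = (fun t : ℕ => (i + b * t, j + a * (r - t))) '' Set.Iic r := by
    ext ⟨x, y⟩
    simp only [Set.mem_setOf_eq, Set.mem_image, Set.mem_Iic, Prod.mk.injEq]
    constructor
    · rintro ⟨hx, hy, hxy⟩
      -- a*x ≡ a*i [MOD b]
      have h1 : a * x ≡ a * i [MOD b] := by
        have hz : b * y ≡ 0 [MOD b] := (Nat.modEq_zero_iff_dvd).mpr ⟨y, rfl⟩
        have hz2 : b * (j + a * r) ≡ 0 [MOD b] := (Nat.modEq_zero_iff_dvd).mpr ⟨_, rfl⟩
        have heq : a * x + b * y = a * i + b * (j + a * r) := by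
          have := hxy; rw [hm] at this; ring_nf; ring_nf at this ⊢; omega
        calc a * x ≡ a * x + b * y [MOD b] := by
              simpa using (Nat.ModEq.add_left (a * x) hz).symm
          _ = a * i + b * (j + a * r) := heq
          _ ≡ a * i + 0 [MOD b] := Nat.ModEq.add_left _ hz2
          _ = a * i := by ring
      have h2 : x ≡ i [MOD b] := h1.cancel_left_of_coprime (by rwa [Nat.gcd_comm] at hab)
      have hxi : x % b = i := by
        have h3 : x % b = i % b := h2
        rwa [Nat.mod_eq_of_lt hib] at h3
      have hdm := Nat.div_add_mod x b
      refine ⟨x / b, ?_, ?_, ?_⟩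
      · -- t ≤ r
        have hx' : x = i + b * (x / b) := by omega
        have key : a * i + b * (a * (x / b) + y) = a * i + b * (j + a * r) := by
          calc a * i + b * (a * (x / b) + y) = a * (i + b * (x / b)) + b * y := by ring
            _ = a * x + b * y := by rw [← hx']
            _ = m := hxy.symm
            _ = a * i + b * (j + a * r) := by rw [hm]; ring
        have key2 : a * (x / b) + y = j + a * r := by
          have := Nat.add_left_cancel key
          exact Nat.eq_of_mul_eq_mul_left hb0 this
        by_contra hcon
        have hle : a * (r + 1) ≤ a * (x / b) := Nat.mul_le_mul_left a (by omega)
        have : a * (r + 1) = a * r + a := by ring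
        omega
      · omega
      · -- y = j + a * (r - x/b)
        have hx' : x = i + b * (x / b) := by omega
        have key : a * i + b * (a * (x / b) + y) = a * i + b * (j + a * r) := by
          calc a * i + b * (a * (x / b) + y) = a * (i + b * (x / b)) + b * y := by ring
            _ = a * x + b * y := by rw [← hx']
            _ = m := hxy.symm
            _ = a * i + b * (j + a * r) := by rw [hm]; ring
        have key2 : a * (x / b) + y = j + a * r := by
          have := Nat.add_left_cancel key
          exact Nat.eq_of_mul_eq_mul_left hb0 this
        have htr : x / b ≤ r := by
          by_contra hcon
          have hle : a * (r + 1) ≤ a * (x / b) := Nat.mul_le_mul_left a (by omega)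
          have : a * (r + 1) = a * r + a := by ring
          omega
        have hsplit : a * (r - x / b) + a * (x / b) = a * r := by
          rw [← Nat.mul_add, Nat.sub_add_cancel htr]
        omega
    · rintro ⟨t, ht, hx, hy⟩
      refine ⟨by omega, by omega, ?_⟩
      have hsplit : t + (r - t) = r := by omega
      calc m = a * i + b * j + a * b * (t + (r - t)) := by rw [hsplit]; exact hm
        _ = a * (i + b * t) + b * (j + a * (r - t)) := by ring
        _ = a * x + b * y := by rw [hx, hy]
  rw [ell, hset]
  rw [Set.ncard_image_of_injOn]
  · rw [← Finset.coe_Iic, Set.ncard_coe_finset, Nat.card_Iic]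
  · intro t1 _ t2 _ h
    have := (Prod.mk.injEq _ _ _ _).mp h
    have h1 : b * t1 = b * t2 := by omega
    exact Nat.eq_of_mul_eq_mul_left hb0 h1
end

section
/- Let a, b ≥ 2 be coprime natural numbers and let i ≥ 1. Then i^{(a−1)(b−1)/2} · M_i · (a·i)! · (b·i)! divides (i!)^{(a−1)(b−1)} · i! · (a·b·i)!, where M_i denotes the product of all natural numbers m with 1 ≤ m ≤ a·b·i and ℓ(a,b,m) = i. (Here (a−1)(b−1) is even since a and b are coprime; the quotient is the order of the finite abelian group K_{2i−1}(ℤ[x,y]/(x^b−y^a), (x,y)).) -/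
open Finset

theorem Nat.factorization_multiset_prod_eq_sum_countP {X : Multiset ℕ} (hX : 0 ∉ X) {p B : ℕ}
    (hp : p.Prime) (hB : ∀ x ∈ X, x < p ^ B) :
    X.prod.factorization p = ∑ k ∈ Ico 1 B, X.countP (p ^ k ∣ ·) := by
  induction X using Multiset.induction_on with
  | empty => simp
  | cons x X ih =>
    rw [Multiset.mem_cons, not_or] at hX
    have hx : 0 < x := Nat.pos_of_ne_zero (Ne.symm hX.1)
    simp only [Multiset.prod_cons, Multiset.countP_cons, sum_add_distrib, ← card_filter,
      Finsupp.add_apply, Nat.factorization_mul hx.ne' (Multiset.prod_ne_zero hX.2),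
      Nat.factorization_eq_card_pow_dvd_of_lt hp hx (hB x (Multiset.mem_cons_self x X)),
      ih hX.2 fun y hy => hB y (Multiset.mem_cons_of_mem hy)]
    ring

theorem Multiset.prod_dvd_prod_of_countP_pow_dvd_le {X Y : Multiset ℕ} (hX : 0 ∉ X)
    (h : ∀ p k, p.Prime → 0 < k → X.countP (p ^ k ∣ ·) ≤ Y.countP (p ^ k ∣ ·)) :
    X.prod ∣ Y.prod := by
  by_cases hY : 0 ∈ Y
  · rw [Multiset.prod_eq_zero hY]
    exact dvd_zero _
  rw [← Nat.factorization_prime_le_iff_dvd (Multiset.prod_ne_zero hX) (Multiset.prod_ne_zero hY)]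
  intro p hp
  have hB : ∀ x ∈ X + Y, x < p ^ (X + Y).sum := fun x hx =>
    (Multiset.le_sum_of_mem hx).trans_lt (Nat.lt_pow_self hp.one_lt)
  rw [Nat.factorization_multiset_prod_eq_sum_countP hX hp fun x hx => hB x (by simp [hx]),
    Nat.factorization_multiset_prod_eq_sum_countP hY hp fun x hx => hB x (by simp [hx])]
  exact sum_le_sum fun k hk => h p k hp (Finset.mem_Ico.mp hk).1

theorem Finset.prod_Ioc_id_eq_factorial (n : ℕ) : ∏ x ∈ Ioc 0 n, x = n.factorial := by
  induction n with
  | zero => rfl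
  | succ n ih => rw [prod_Ioc_succ_top n.zero_le, ih, Nat.factorial_succ, mul_comm]

theorem Nat.div_add_div_add_card_filter_dvd_le {a b n q : ℕ} (ha : 0 < a) (hb : 0 < b)
    (hab : a.Coprime b) {T : Finset ℕ} (hT : T ⊆ Ioc 0 (a * b * n))
    (hTa : ∀ m ∈ T, ¬ a ∣ m) (hTb : ∀ m ∈ T, ¬ b ∣ m) :
    a * n / q + b * n / q + #{m ∈ T | q ∣ m} ≤ a * b * n / q + n / q := by
  let D (d : ℕ) : Finset ℕ := {x ∈ Ioc 0 (a * b * n) | d ∣ x}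
  have hDb : #(D (q * b)) = a * n / q := by
    rw [Nat.Ioc_filter_dvd_card_eq_div, mul_right_comm, Nat.mul_div_mul_right _ _ hb]
  have hDa : #(D (q * a)) = b * n / q := by
    rw [Nat.Ioc_filter_dvd_card_eq_div, mul_comm a b, mul_right_comm, Nat.mul_div_mul_right _ _ ha]
  have hDab : #(D (q * b) ∩ D (q * a)) = n / q := by
    have hlcm (x : ℕ) : q * b ∣ x ∧ q * a ∣ x ↔ q * (a * b) ∣ x := by
      rw [← Nat.lcm_dvd_iff, Nat.lcm_mul_left, hab.symm.lcm_eq_mul, mul_comm b a]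
    have : D (q * b) ∩ D (q * a) = D (q * (a * b)) := by
      simp only [D, ← filter_and, hlcm]
    rw [this, Nat.Ioc_filter_dvd_card_eq_div, mul_comm (a * b) n,
      Nat.mul_div_mul_right _ _ (Nat.mul_pos ha hb)]
  have hdisj : Disjoint (D (q * b) ∪ D (q * a)) {m ∈ T | q ∣ m} := by
    rw [disjoint_right]
    intro m hm
    simp only [D, mem_union, mem_filter] at hm ⊢
    exact fun h => h.elim (fun h => hTb m hm.1 (dvd_of_mul_left_dvd h.2))
      (fun h => hTa m hm.1 (dvd_of_mul_left_dvd h.2))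
  have hsub : D (q * b) ∪ D (q * a) ∪ {m ∈ T | q ∣ m} ⊆ D q := by
    intro x hx
    simp only [D, mem_union, mem_filter] at hx ⊢
    rcases hx with (h | h) | h
    · exact ⟨h.1, dvd_of_mul_right_dvd h.2⟩
    · exact ⟨h.1, dvd_of_mul_right_dvd h.2⟩
    · exact ⟨hT h.1, h.2⟩
  have := card_le_card hsub
  rw [card_union_of_disjoint hdisj, Nat.Ioc_filter_dvd_card_eq_div] at this
  have := card_union_add_card_inter (D (q * b)) (D (q * a))
  omega

theorem ell_comm (a b m : ℕ) : ell a b m = ell b a m := by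
  rw [ell, ell, ← Set.ncard_image_of_injective _ Prod.swap_injective,
    Set.image_swap_eq_preimage_swap]
  congr 1
  ext ⟨j, k⟩
  simp only [Set.mem_preimage, Set.mem_ofPred_eq, Prod.swap_prod_mk]
  constructor <;> rintro ⟨hj, hk, h⟩ <;> exact ⟨hk, hj, by rw [h, add_comm]⟩

theorem ell_lt_of_dvd_left {a b m i : ℕ} (ha : 0 < a) (hab : a.Coprime b) (hi : 0 < i)
    (hdvd : a ∣ m) (hm : m ≤ a * b * i) : ell a b m < i := by
  have hdvd_snd : ∀ {j k}, m = a * j + b * k → a ∣ k := fun h =>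
    hab.dvd_of_dvd_mul_left ((Nat.dvd_add_right (dvd_mul_right a _)).mp (h ▸ hdvd))
  have hmaps : ∀ p ∈ {p : ℕ × ℕ | 0 < p.1 ∧ 0 < p.2 ∧ m = a * p.1 + b * p.2},
      p.2 / a ∈ (Ico 1 i : Set ℕ) := by
    rintro ⟨j, k⟩ ⟨hj, hk, hjk : m = a * j + b * k⟩
    obtain ⟨k, rfl⟩ := hdvd_snd hjk
    have : a * b * k < a * b * i := by nlinarith
    simp only [coe_Ico, Set.mem_Ico, Nat.mul_div_cancel_left k ha]
    exact ⟨Nat.pos_of_mul_pos_left hk, Nat.lt_of_mul_lt_mul_left this⟩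
  have hinj : Set.InjOn (fun p : ℕ × ℕ => p.2 / a)
      {p : ℕ × ℕ | 0 < p.1 ∧ 0 < p.2 ∧ m = a * p.1 + b * p.2} := by
    rintro ⟨j, k⟩ ⟨-, -, hjk : m = a * j + b * k⟩ ⟨j', k'⟩ ⟨-, -, hjk' : m = a * j' + b * k'⟩
      (h : k / a = k' / a)
    obtain rfl : k = k' := by
      rw [← Nat.div_mul_cancel (hdvd_snd hjk), ← Nat.div_mul_cancel (hdvd_snd hjk'), h]
    simp only [Prod.mk.injEq, and_true]
    exact Nat.eq_of_mul_eq_mul_left ha (by omega)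
  calc ell a b m ≤ (Ico 1 i : Set ℕ).ncard :=
        Set.ncard_le_ncard_of_injOn _ hmaps hinj (finite_toSet _)
    _ < i := by rw [Set.ncard_coe_finset, Nat.card_Ico]; omega

theorem ell_lt_of_dvd_right {a b m i : ℕ} (hb : 0 < b) (hab : a.Coprime b) (hi : 0 < i)
    (hdvd : b ∣ m) (hm : m ≤ a * b * i) : ell a b m < i := by
  rw [ell_comm]
  exact ell_lt_of_dvd_left hb hab.symm hi hdvd (by rwa [mul_comm b a])

theorem pow_mul_prod_mul_factorial_mul_factorial_dvd {a b n s e : ℕ} (ha : 0 < a) (hb : 0 < b)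
    (hab : a.Coprime b) (hn : 0 < n) (hse : s ≤ e) {T : Finset ℕ} (hT : T ⊆ Ioc 0 (a * b * n))
    (hTa : ∀ m ∈ T, ¬ a ∣ m) (hTb : ∀ m ∈ T, ¬ b ∣ m) :
    n ^ s * (∏ m ∈ T, m) * (a * n).factorial * (b * n).factorial ∣
      n.factorial ^ e * n.factorial * (a * b * n).factorial := by
  have hLHS : n ^ s * (∏ m ∈ T, m) * (a * n).factorial * (b * n).factorial =
      (s • {n} + T.val + (Ioc 0 (a * n)).val + (Ioc 0 (b * n)).val).prod := by
    simp only [Multiset.prod_add, Multiset.prod_nsmul, Multiset.prod_singleton, prod_val,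
      id_eq, prod_Ioc_id_eq_factorial]
  have hRHS : n.factorial ^ e * n.factorial * (a * b * n).factorial =
      ((e + 1) • (Ioc 0 n).val + (Ioc 0 (a * b * n)).val).prod := by
    simp only [Multiset.prod_add, Multiset.prod_nsmul, prod_val, id_eq,
      prod_Ioc_id_eq_factorial, pow_succ]
  rw [hLHS, hRHS]
  refine Multiset.prod_dvd_prod_of_countP_pow_dvd_le ?_ fun p k hp _ => ?_
  · simp only [Multiset.mem_add, Multiset.mem_nsmul, Multiset.mem_singleton, mem_val, mem_Ioc,
      not_or]
    exact ⟨⟨⟨fun h => hn.ne h.2, fun h => (mem_Ioc.mp (hT h)).1.ne rfl⟩, by simp⟩, by simp⟩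
  · have hval (t : Finset ℕ) : t.val.countP (p ^ k ∣ ·) = #{x ∈ t | p ^ k ∣ x} :=
      Multiset.countP_eq_card_filter _ _
    have hpow : (if p ^ k ∣ n then 1 else 0) ≤ n / p ^ k := by
      split_ifs with hdvd
      · exact Nat.div_pos (Nat.le_of_dvd hn hdvd) (pow_pos hp.pos k)
      · exact Nat.zero_le _
    have := Nat.mul_le_mul hse hpow
    have := Nat.div_add_div_add_card_filter_dvd_le (q := p ^ k) ha hb hab hT hTa hTb
    simp only [Multiset.countP_add, Multiset.countP_nsmul, ← Multiset.cons_zero,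
      Multiset.countP_cons, Multiset.countP_zero, zero_add, hval, Nat.Ioc_filter_dvd_card_eq_div]
    rw [add_one_mul]
    omega

theorem order_K_odd_dvd (a b : ℕ) (ha : 2 ≤ a) (hb : 2 ≤ b)
    (hab : Nat.gcd a b = 1) (i : ℕ) (hi : 1 ≤ i) :
    i ^ ((a - 1) * (b - 1) / 2) *
        (∏ m ∈ (Finset.Icc 1 (a * b * i)).filter (fun m => ell a b m = i), m) *
        Nat.factorial (a * i) * Nat.factorial (b * i) ∣
      Nat.factorial i ^ ((a - 1) * (b - 1)) * Nat.factorial i *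
        Nat.factorial (a * b * i) := by
  set L := (Icc 1 (a * b * i)).filter (fun m => ell a b m = i)
  have hL : L ⊆ Ioc 0 (a * b * i) := fun m hm => by
    simp only [L, mem_filter, mem_Icc, mem_Ioc] at hm ⊢
    omega
  have hLa : ∀ m ∈ L, ¬ a ∣ m := fun m hm hdvd =>
    (ell_lt_of_dvd_left (by omega) hab hi hdvd (mem_Ioc.mp (hL hm)).2).ne (mem_filter.mp hm).2
  have hLb : ∀ m ∈ L, ¬ b ∣ m := fun m hm hdvd =>
    (ell_lt_of_dvd_right (by omega) hab hi hdvd (mem_Ioc.mp (hL hm)).2).ne (mem_filter.mp hm).2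
  exact pow_mul_prod_mul_factorial_mul_factorial_dvd (by omega) (by omega) hab hi
    (Nat.div_le_self _ 2) hL hLa hLb
end
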